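/- For every bound function α : X → ℕ, the set of regions with respect to α is a finite partition of the set of all clock valuations (ℝ≥0)^X: the regions are pairwise disjoint, every valuation belongs to some region, every region is non-empty, and there are finitely many regions. -/

import Mathlib

attribute [local instance] Classical.propDecidable

noncomputable section

namespace TAform

/-! ### Weights `(≼, c)` with `c ∈ ℤ ∪ {∞}` -/

/-- Values in `ℤ ∪ {∞}`: `none` represents `∞`. -/
abbrev OVal := Option ℤ

/-- Addition on `ℤ ∪ {∞}`. -/
def ovAdd : OVal → OVal → OVal
  | some a, some b => some (a + b)
  | _, _ => none

/-- Strict order on `ℤ ∪ {∞}`. -/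
def ovLt : OVal → OVal → Prop
  | some a, some b => a < b
  | some _, none => True
  | none, _ => False

/-- A weight `(≼, c)`: `strict = true` means `≼` is `<`, `strict = false` means `≤`;
`val ∈ ℤ ∪ {∞}`. -/
structure Weight where
  strict : Bool
  val : OVal

/-- The weight `(<, ∞)`. -/
def winf : Weight := ⟨true, none⟩

/-- The weight `(≤, c)`. -/
def wle (c : ℤ) : Weight := ⟨false, some c⟩

/-- The weight `(<, c)`. -/
def wlt (c : ℤ) : Weight := ⟨true, some c⟩

/-- Addition: `(≼₁,c₁)+(≼₂,c₂) = (≼,c₁+c₂)` where `≼` is `<` iff `≼₁` or `≼₂` is `<`. -/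
def Weight.add (a b : Weight) : Weight := ⟨a.strict || b.strict, ovAdd a.val b.val⟩

/-- Order: `(≼₁,c₁) < (≼₂,c₂)` iff `c₁ < c₂`, or `c₁ = c₂`, `≼₁` is `<` and `≼₂` is `≤`. -/
def Weight.lt (a b : Weight) : Prop :=
  ovLt a.val b.val ∨ (a.val = b.val ∧ a.strict = true ∧ b.strict = false)

def Weight.le (a b : Weight) : Prop := Weight.lt a b ∨ a = b

/-- Minus: `−(≼,c) = (≼,−c)`. -/
def Weight.neg (w : Weight) : Weight := ⟨w.strict, Option.map (fun c => -c) w.val⟩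

/-- Floor: `⌊(<,c)⌋ = (≤,c−1)` and `⌊(≤,c)⌋ = (≤,c)`. -/
def Weight.floor (w : Weight) : Weight :=
  ⟨false, if w.strict then Option.map (fun c => c - 1) w.val else w.val⟩

/-- Ceiling (on integer-valued weights): `⌈(≤,c)⌉ = (≤,c)` and `⌈(<,c)⌉ = (<,c+1)`. -/
def Weight.ceil (w : Weight) : Weight :=
  if w.strict then ⟨true, Option.map (fun c => c + 1) w.val⟩ else w

/-- Maximum of two weights. -/
def Weight.max (a b : Weight) : Weight := if Weight.lt a b then b else a

/-- Satisfaction: `d ≼ c` for a real number `d` and a weight `(≼,c)`. -/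
def Weight.sat (w : Weight) (d : ℝ) : Prop :=
  match w.val with
  | none => True
  | some c => if w.strict then d < (c : ℝ) else d ≤ (c : ℝ)

/-! ### Distance graphs and their semantics -/

/-- Vertices: clocks of `X` together with the special vertex `x₀` (represented by `none`). -/
abbrev Vtx (X : Type*) := Option X

/-- A distance graph: a weight for every ordered pair of vertices.  The edge
`a →^{≼ c} b` represents the constraint `v b − v a ≼ c`. -/
abbrev DGraph (X : Type*) := Vtx X → Vtx X → Weight

/-- A clock valuation. -/
abbrev Val (X : Type*) := X → ℝ

/-- The valuation is nonnegative (clock valuations map into `ℝ≥0`). -/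
def Nonneg {X : Type*} (v : Val X) : Prop := ∀ x, 0 ≤ v x

/-- Extension of a valuation to all vertices, sending `x₀` to `0`. -/
def extV {X : Type*} (v : Val X) : Vtx X → ℝ
  | none => 0
  | some x => v x

/-- Semantics of a distance graph: the set of nonnegative clock valuations
(with `x₀ = 0`) satisfying all edge constraints. -/
def sem {X : Type*} (G : DGraph X) : Set (Val X) :=
  { v | Nonneg v ∧ ∀ a b, (G a b).sat (extV v b - extV v a) }

/-- Weight of the path `a :: l ++ [b]` in `G` (sum of the weights of its edges). -/
def pathWeight {X : Type*} (G : DGraph X) : Vtx X → List (Vtx X) → Vtx X → Weight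
  | a, [], b => G a b
  | a, c :: l, b => (G a c).add (pathWeight G c l b)

/-- `G` has only positive cycles: no cycle has weight at most `(<,0)`. -/
def OnlyPositiveCycles {X : Type*} (G : DGraph X) : Prop :=
  ∀ (a : Vtx X) (l : List (Vtx X)), ¬ (pathWeight G a l a).le (wlt 0)

/-- Canonical form: the weight of the edge from `a` to `b` is a lower bound of the
weights of all paths from `a` to `b`. -/
def PathCanonical {X : Type*} (G : DGraph X) : Prop :=
  ∀ (a b : Vtx X) (l : List (Vtx X)), (G a b).le (pathWeight G a l b)

/-- The weight `w` bounds the difference `v b − v a` over all `v ∈ S`. -/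
def Bounds {X : Type*} (S : Set (Val X)) (a b : Vtx X) (w : Weight) : Prop :=
  ∀ v ∈ S, w.sat (extV v b - extV v a)

/-- `G` is the canonical distance graph of the set `S`: it represents `S` and each of
its edge weights is the least weight bounding the corresponding difference over `S`
(equivalently, for sets defined by clock constraints, the lower bound of the weights
of paths between its endpoints). -/
def IsCanonGraph {X : Type*} (G : DGraph X) (S : Set (Val X)) : Prop :=
  sem G = S ∧ ∀ a b w, Bounds S a b w → (G a b).le w

/-- A zone: a set of valuations defined by a conjunction of constraints of the form
`x − y # c` or `x # c`, i.e. the set represented by some distance graph. -/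
def IsZone {X : Type*} (Z : Set (Val X)) : Prop := ∃ G : DGraph X, sem G = Z

/-! ### Regions and closure -/

/-- Region equivalence with respect to the bound function `α`: same integer parts
(or both above the bound), same set of clocks with zero fractional part, and the
same ordering of fractional parts of bounded clocks. -/
def regEq {X : Type*} (α : X → ℕ) (v w : Val X) : Prop :=
  (∀ x, ((α x : ℝ) < v x ∧ (α x : ℝ) < w x) ∨
    (⌊v x⌋ = ⌊w x⌋ ∧ (Int.fract (v x) = 0 ↔ Int.fract (w x) = 0))) ∧
  (∀ x y, v x ≤ (α x : ℝ) → v y ≤ (α y : ℝ) →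
    (Int.fract (v x) ≤ Int.fract (v y) ↔ Int.fract (w x) ≤ Int.fract (w y)))

/-- A region with respect to `α`: an equivalence class of region equivalence
(inside the nonnegative valuations). -/
def IsRegion {X : Type*} (α : X → ℕ) (R : Set (Val X)) : Prop :=
  ∃ v : Val X, Nonneg v ∧ R = { w | Nonneg w ∧ regEq α v w }

/-- Closure abstraction: the union of the regions (w.r.t. `α`) intersecting `S`. -/
def Closure {X : Type*} (α : X → ℕ) (S : Set (Val X)) : Set (Val X) :=
  ⋃₀ { R | IsRegion α R ∧ (R ∩ S).Nonempty }

/-! ### LU-bounds and the `Extra⁺_LU` extrapolation -/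

/-- `w > (≤, l)` where `l ∈ ℕ ∪ {−∞}` (`⊥` is `−∞`). -/
def gtLB (w : Weight) (l : WithBot ℕ) : Prop :=
  ∀ n : ℕ, l = (n : WithBot ℕ) → ovLt (some (n : ℤ)) w.val

/-- `−w > (≤, l)` where `l ∈ ℕ ∪ {−∞}`. -/
def negGtLB (w : Weight) (l : WithBot ℕ) : Prop :=
  ∃ c : ℤ, w.val = some c ∧ ∀ n : ℕ, l = (n : WithBot ℕ) → c < -(n : ℤ)

/-- The weight `(<, −u)` for `u ∈ ℕ ∪ {−∞}` (with `(<,∞)` when `u = −∞`). -/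
def wltNeg (u : WithBot ℕ) : Weight :=
  ⟨true, WithBot.recBotCoe none (fun n => some (-(n : ℤ))) u⟩

/-- The `Extra⁺_{LU}` extrapolation, applied edgewise to a distance graph `G`
(the canonical graph of a zone): `Z⁺_{xy} = (<,∞)` if `Z_{xy} > (≤,L_y)`, or
`−Z_{y0} > (≤,L_y)`, or `−Z_{x0} > (≤,U_x)` and `y ≠ x₀`;
`Z⁺_{x0} = (<,−U_x)` if `−Z_{x0} > (≤,U_x)`; and `Z⁺_{xy} = Z_{xy}` otherwise. -/
def extraLU {X : Type*} (L U : X → WithBot ℕ) (G : DGraph X) : DGraph X := fun a b =>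
  match a, b with
  | some x, some y =>
      if gtLB (G (some x) (some y)) (L y) ∨ negGtLB (G (some y) none) (L y) ∨
          negGtLB (G (some x) none) (U x)
      then winf else G (some x) (some y)
  | none, some y =>
      if gtLB (G none (some y)) (L y) ∨ negGtLB (G (some y) none) (L y)
      then winf else G none (some y)
  | some x, none =>
      if negGtLB (G (some x) none) (U x) then wltNeg (U x) else G (some x) none
  | none, none => G none none

/-! ### LU-preorder and its abstraction -/

/-- `l < r` where `l ∈ ℕ ∪ {−∞}` and `r : ℝ`. -/
def lbLtR (l : WithBot ℕ) (r : ℝ) : Prop := ∀ n : ℕ, l = (n : WithBot ℕ) → (n : ℝ) < r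

/-- The LU-preorder `ν' ≼_{LU} ν`: for each clock `x`, either `ν' x = ν x`,
or `L x < ν' x < ν x`, or `U x < ν x < ν' x`. -/
def LUpre {X : Type*} (L U : X → WithBot ℕ) (ν' ν : Val X) : Prop :=
  ∀ x, ν' x = ν x ∨ (lbLtR (L x) (ν' x) ∧ ν' x < ν x) ∨ (lbLtR (U x) (ν x) ∧ ν x < ν' x)

/-- The abstraction `a_{≼LU}(W) = { ν | ∃ ν' ∈ W, ν' ≼_{LU} ν }` (inside the
nonnegative valuations). -/
def aLU {X : Type*} (L U : X → WithBot ℕ) (W : Set (Val X)) : Set (Val X) :=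
  { ν | Nonneg ν ∧ ∃ ν' ∈ W, LUpre L U ν' ν }

/-! ### Guards, transitions, timed automata -/

/-- Comparison operators `# ∈ {<, ≤, =, ≥, >}`. -/
inductive Cmp | lt | le | eq | ge | gt
deriving DecidableEq

/-- Satisfaction of a comparison by real numbers. -/
def Cmp.sat : Cmp → ℝ → ℝ → Prop
  | .lt, a, b => a < b
  | .le, a, b => a ≤ b
  | .eq, a, b => a = b
  | .ge, a, b => a ≥ b
  | .gt, a, b => a > b

/-- A clock constraint (guard): a conjunction (list) of constraints `x # c`, `c ∈ ℕ`. -/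
abbrev Guard (X : Type*) := List (X × Cmp × ℕ)

/-- `v ⊨ g`: every conjunct of the guard holds. -/
def gsat {X : Type*} (v : Val X) (g : Guard X) : Prop :=
  ∀ p ∈ g, Cmp.sat p.2.1 (v p.1) (p.2.2 : ℝ)

/-- `[R]v`: reset the clocks in `R` to `0`, leaving the others unchanged. -/
def resetVal {X : Type*} (R : Set X) (v : Val X) : Val X := Set.indicator Rᶜ v

/-- One step `ν →^{δ,t} ν'` for a transition with guard `g` and reset set `R`:
`ν + δ ⊨ g` and `ν' = [R](ν + δ)`. -/
def step {X : Type*} (g : Guard X) (R : Set X) (δ : ℝ) (ν ν' : Val X) : Prop :=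
  0 ≤ δ ∧ gsat (fun x => ν x + δ) g ∧ ν' = resetVal R (fun x => ν x + δ)

/-- `Post(S,t)`: all valuations reachable by the transition from valuations in `S`. -/
def Post {X : Type*} (g : Guard X) (R : Set X) (S : Set (Val X)) : Set (Val X) :=
  { ν' | ∃ ν ∈ S, ∃ δ : ℝ, step g R δ ν ν' }

/-- A timed automaton `(Q, q₀, X, T, Acc)`. -/
structure TimedAuto (Q X : Type*) where
  init : Q
  trans : Set (Q × Guard X × Set X × Q)
  acc : Set Q

/-- `(q,ν) →^{δ,t} (q',ν')` for a transition `t = (q,g,R,q')` of the automaton. -/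
def TimedAuto.cstep {Q X : Type*} (A : TimedAuto Q X) (t : Q × Guard X × Set X × Q)
    (δ : ℝ) (c c' : Q × Val X) : Prop :=
  t ∈ A.trans ∧ c.1 = t.1 ∧ c'.1 = t.2.2.2 ∧ step t.2.1 t.2.2.1 δ c.2 c'.2

/-! On nonnegative valuations, region equivalence is equality of a signature with finitely
many values: for each clock, either "above its bound" or its integer part together with whether
it is an integer, and for each pair of bounded clocks the order of their fractional parts.
Regions are therefore exactly the nonempty fibres of a map into a finite type. -/

section FloorRing

variable {R : Type*} [Ring R] [LinearOrder R] [IsOrderedRing R] [FloorRing R] {r s : R}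

theorem ceil_eq_ceil_of_floor_eq (hf : ⌊r⌋ = ⌊s⌋) (hz : Int.fract r = 0 ↔ Int.fract s = 0) :
    ⌈r⌉ = ⌈s⌉ := by
  by_cases hr : Int.fract r = 0
  · obtain ⟨m, rfl⟩ := Int.fract_eq_zero_iff.1 hr
    obtain ⟨n, rfl⟩ := Int.fract_eq_zero_iff.1 (hz.1 hr)
    simpa using hf
  · have hs : Int.fract s ≠ 0 := fun h => hr (hz.2 h)
    rw [(Int.ceil_eq_floor_add_one_iff_notMem r).2 (Int.fract_eq_zero_iff.not.1 hr),
      (Int.ceil_eq_floor_add_one_iff_notMem s).2 (Int.fract_eq_zero_iff.not.1 hs), hf]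

theorem le_natCast_iff_of_floor_eq (hf : ⌊r⌋ = ⌊s⌋) (hz : Int.fract r = 0 ↔ Int.fract s = 0)
    (a : ℕ) : r ≤ a ↔ s ≤ a := by
  rw [← Int.cast_natCast a, ← Int.ceil_le, ← Int.ceil_le, ceil_eq_ceil_of_floor_eq hf hz]

end FloorRing

def clockSig (a : ℕ) (r : ℝ) : Option (Fin (a + 1) × Prop) :=
  if h : r ≤ a then some (⟨⌊r⌋₊, Nat.lt_succ_of_le (Nat.floor_le_of_le h)⟩, Int.fract r = 0)
  else none

theorem clockSig_eq_none_iff {a : ℕ} {r : ℝ} : clockSig a r = none ↔ (a : ℝ) < r := by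
  simp [clockSig]

theorem le_iff_le_of_clockSig_eq {a : ℕ} {r s : ℝ} (h : clockSig a r = clockSig a s) :
    r ≤ a ↔ s ≤ a := by
  rw [← not_lt, ← not_lt, ← clockSig_eq_none_iff, ← clockSig_eq_none_iff, h]

theorem clockSig_eq_iff {a : ℕ} {r s : ℝ} (hr : 0 ≤ r) (hs : 0 ≤ s) :
    clockSig a r = clockSig a s ↔
      ((a : ℝ) < r ∧ (a : ℝ) < s) ∨ (⌊r⌋ = ⌊s⌋ ∧ (Int.fract r = 0 ↔ Int.fract s = 0)) := by
  have hfloor : ⌊r⌋₊ = ⌊s⌋₊ ↔ ⌊r⌋ = ⌊s⌋ := by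
    rw [← Int.natCast_floor_eq_floor hr, ← Int.natCast_floor_eq_floor hs, Nat.cast_inj]
  have hle : ⌊r⌋ = ⌊s⌋ → (Int.fract r = 0 ↔ Int.fract s = 0) → (r ≤ a ↔ s ≤ a) :=
    fun hf hz => le_natCast_iff_of_floor_eq hf hz a
  by_cases hra : r ≤ a <;> by_cases hsa : s ≤ a <;>
    simp only [clockSig, hra, hsa, hfloor, dite_true, dite_false, Option.some.injEq,
      Prod.mk.injEq, Fin.mk.injEq, eq_iff_iff, reduceCtorEq, ← not_le, true_iff, false_iff] <;>
    tauto

def regionSig {X : Type*} (α : X → ℕ) (v : Val X) :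
    ((x : X) → Option (Fin (α x + 1) × Prop)) × (X → X → Prop) :=
  (fun x => clockSig (α x) (v x),
    fun x y => v x ≤ α x ∧ v y ≤ α y ∧ Int.fract (v x) ≤ Int.fract (v y))

theorem regEq_iff_regionSig_eq {X : Type*} {α : X → ℕ} {v w : Val X} (hv : Nonneg v)
    (hw : Nonneg w) : regEq α v w ↔ regionSig α v = regionSig α w := by
  simp only [regEq, regionSig, Prod.ext_iff, funext_iff]
  rw [forall_congr' fun x => (clockSig_eq_iff (hv x) (hw x)).symm]
  refine and_congr_right fun hsig => forall₂_congr fun x y => ?_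
  rw [eq_iff_iff, le_iff_le_of_clockSig_eq (hsig x), le_iff_le_of_clockSig_eq (hsig y)]
  tauto

theorem region_eq_fiber_regionSig {X : Type*} {α : X → ℕ} {v : Val X} (hv : Nonneg v) :
    { w | Nonneg w ∧ regEq α v w } = { w | Nonneg w ∧ regionSig α w = regionSig α v } := by
  ext w
  exact and_congr_right fun hw => (regEq_iff_regionSig_eq hv hw).trans eq_comm

/-- The regions w.r.t. `α` form a finite partition of the set of all
clock valuations: pairwise disjoint, covering, non-empty, and finitely many. -/
theorem stmt14 {X : Type*} [Fintype X] (α : X → ℕ) :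
    (∀ R R' : Set (Val X), IsRegion α R → IsRegion α R' → R ≠ R' → Disjoint R R') ∧
    (∀ v : Val X, Nonneg v → ∃ R : Set (Val X), IsRegion α R ∧ v ∈ R) ∧
    (∀ R : Set (Val X), IsRegion α R → R.Nonempty) ∧
    { R : Set (Val X) | IsRegion α R }.Finite := by
  have self_mem {v : Val X} (hv : Nonneg v) : v ∈ { w | Nonneg w ∧ regEq α v w } := by
    rw [region_eq_fiber_regionSig hv]
    exact ⟨hv, rfl⟩
  refine ⟨?_, fun v hv => ⟨_, ⟨v, hv, rfl⟩, self_mem hv⟩,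
    fun R ⟨v, hv, hR⟩ => ⟨v, hR ▸ self_mem hv⟩, ?_⟩
  · rintro R R' ⟨v, hv, rfl⟩ ⟨v', hv', rfl⟩ hne
    rw [region_eq_fiber_regionSig hv, region_eq_fiber_regionSig hv'] at hne ⊢
    refine Set.disjoint_left.2 fun w hw hw' => hne ?_
    rw [← hw.2, ← hw'.2]
  · refine (Set.finite_range fun s => { w : Val X | Nonneg w ∧ regionSig α w = s }).subset ?_
    rintro R ⟨v, hv, rfl⟩
    exact ⟨regionSig α v, (region_eq_fiber_regionSig hv).symm⟩

end TAform

end
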